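/- Let H be a subgroup of (Z/vZ)ˣ and set H* = H ∪ (-1)·H. If X ⊆ Z/vZ is a union of H-orbits and x_i = -1 for i ∈ X, x_i = 1 otherwise, then PSD_X is constant on the orbits of H* acting on Z/vZ by multiplication. -/

import Mathlib

open scoped Classical

noncomputable def PSDZ (v : ℕ) [NeZero v] (x : ZMod v → ℝ) (k : ZMod v) : ℝ :=
  ‖(∑ α : ZMod v, (x α : ℂ)
    * Complex.exp (2 * (Real.pi : ℂ) * Complex.I * ((α * k).val : ℕ) / v))‖ ^ 2

/-!
`PSDZ v x` is the squared modulus of the Fourier transform `k ↦ ∑ α, x α ψ(α k)` of `x` with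
respect to the standard additive character `ψ` of `ZMod v`. If `x` is invariant under
multiplication by `s`, reindexing the sum by `α ↦ s α` shows that the transform itself is
invariant under `k ↦ k s`. Since `x` is real and `ψ` is unitary, the transform at `-k` is the
complex conjugate of the transform at `k`, so its modulus is also invariant under `k ↦ -k`,
which accounts for the units `s` with `-s ∈ H`.
-/

open ComplexConjugate

section FourierSum

variable {R : Type*} [CommRing R] [Fintype R] (ψ : AddChar R ℂ) (f : R → ℝ)

noncomputable def fourierSum (k : R) : ℂ := ∑ α, (f α : ℂ) * ψ (α * k)

theorem fourierSum_mul_unit {u : Rˣ} (hf : ∀ α, f (u * α) = f α) (k : R) :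
    fourierSum ψ f (k * u) = fourierSum ψ f k := by
  refine Fintype.sum_equiv (Units.mulLeft u) _ _ fun α ↦ ?_
  rw [Units.mulLeft_apply, hf]
  ring_nf

theorem fourierSum_neg (k : R) : fourierSum ψ f (-k) = conj (fourierSum ψ f k) := by
  simp only [fourierSum, map_sum, map_mul, Complex.conj_ofReal, ← AddChar.map_neg_eq_conj,
    mul_neg]

theorem norm_fourierSum_mul_neg_unit {u : Rˣ} (hf : ∀ α, f (-u * α) = f α) (k : R) :
    ‖fourierSum ψ f (k * u)‖ = ‖fourierSum ψ f k‖ := by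
  have hneg : k * u = -k * ↑(-u) := by rw [Units.val_neg, neg_mul_neg]
  rw [hneg, fourierSum_mul_unit ψ f (by simpa using hf), fourierSum_neg, Complex.norm_conj]

end FourierSum

theorem PSDZ_eq_norm_fourierSum_sq (v : ℕ) [NeZero v] (x : ZMod v → ℝ) (k : ZMod v) :
    PSDZ v x k = ‖fourierSum ZMod.stdAddChar x k‖ ^ 2 := by
  simp only [PSDZ, fourierSum, ZMod.stdAddChar_apply, ZMod.toCircle_apply]

/-- If `X ⊆ Z/vZ` is a union of `H`-orbits and `x_i = ±1` according to membership in `X`,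
then the power spectral density is constant on orbits of `H* = H ∪ (-1)H`. -/
theorem stmt14 (v : ℕ) [NeZero v] (H : Subgroup (ZMod v)ˣ)
    (X : Set (ZMod v))
    (hX : ∀ α : ZMod v, ∀ s ∈ H, ((s : (ZMod v)ˣ) : ZMod v) * α ∈ X ↔ α ∈ X)
    (x : ZMod v → ℝ) (hx : ∀ i, x i = if i ∈ X then -1 else 1)
    (k k' : ZMod v)
    (horb : ∃ s : (ZMod v)ˣ, (s ∈ H ∨ -s ∈ H) ∧ k' = k * ((s : (ZMod v)ˣ) : ZMod v)) :
    PSDZ v x k = PSDZ v x k' := by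
  have hxH : ∀ s ∈ H, ∀ α, x (s * α) = x α := fun s hs α ↦ by simp only [hx, hX α s hs]
  obtain ⟨s, hs | hs, rfl⟩ := horb
  · rw [PSDZ_eq_norm_fourierSum_sq, PSDZ_eq_norm_fourierSum_sq,
      fourierSum_mul_unit _ _ (hxH s hs)]
  · rw [PSDZ_eq_norm_fourierSum_sq, PSDZ_eq_norm_fourierSum_sq,
      norm_fourierSum_mul_neg_unit _ _ (by simpa using hxH (-s) hs)]
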